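/- The DAG D^k_A on a 2×n array A with distinct entries has at most 6kn nodes; in particular, for each fixed position (α, β) in A, the number of non-leaf nodes p of D^k_A whose k-th largest element is located at (α, β) is at most k. -/

import Mathlib

/-!
Every node `[a, b]` of `D^k_A` is flanked by columns that each hold an entry ranking among the
top `k` of `[a, b]`: the child boundaries are placed at the extreme columns of the Top-`k`
answer of the parent. So if the `k`-th largest entry `x` of a non-leaf node sits at `(α, β)`,
both flanking columns hold entries above `x`. Consequently two such nodes are never nested, and
moving the left end rightwards strictly lowers the number of entries above `x` in columns
`a..β`, a number below `k`; this gives at most `k` non-leaf nodes per position, at most `2kn`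
in all, and every other node except the root is one of their `≤ 4kn` children.
-/

/-- `InRange a b p` : `p` is a position of a 2-row array lying in columns `a..b`. -/
def InRange (a b : ℕ) (p : ℕ × ℕ) : Prop :=
  (p.1 = 1 ∨ p.1 = 2) ∧ a ≤ p.2 ∧ p.2 ≤ b

/-- The set of positions of the `min(k, 2(b-a+1))` largest values of `A` restricted to
columns `a..b`: those positions in range dominated by fewer than `k` in-range values. -/
def TopkSet (A : ℕ → ℕ → ℝ) (k a b : ℕ) : Set (ℕ × ℕ) :=
  {p | InRange a b p ∧ {q | InRange a b q ∧ A p.1 p.2 < A q.1 q.2}.ncard < k}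

/-- The leftmost column among the answers of the Top-k query on columns `a..b`. -/
noncomputable def leftCol (A : ℕ → ℕ → ℝ) (k a b : ℕ) : ℕ :=
  sInf {c | ∃ r, (r, c) ∈ TopkSet A k a b}

/-- The rightmost column among the answers of the Top-k query on columns `a..b`. -/
noncomputable def rightCol (A : ℕ → ℕ → ℝ) (k a b : ℕ) : ℕ :=
  sSup {c | ∃ r, (r, c) ∈ TopkSet A k a b}

/-- `IsChild A k q p` : `q` is a non-leaf node (interval) and `p` is its left or right
child in the DAG `D^k_A`. -/
def IsChild (A : ℕ → ℕ → ℝ) (k : ℕ) (q p : ℕ × ℕ) : Prop :=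
  k < 2 * (q.2 - q.1 + 1) ∧
    ((p = (q.1, rightCol A k q.1 q.2 - 1) ∧ q.1 < rightCol A k q.1 q.2) ∨
     (p = (leftCol A k q.1 q.2 + 1, q.2) ∧ leftCol A k q.1 q.2 < q.2))

/-- The nodes of the DAG `D^k_A` on a `2 × n` array: the root is `[1, n]`, and the
children of a non-leaf node are as prescribed by `IsChild`. -/
inductive IsNode (A : ℕ → ℕ → ℝ) (k n : ℕ) : ℕ × ℕ → Prop
  | root : IsNode A k n (1, n)
  | child {q p : ℕ × ℕ} : IsNode A k n q → IsChild A k q p → IsNode A k n p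

/-- `p` is a descendant of `q` in the DAG `D^k_A`. -/
def Descendant (A : ℕ → ℕ → ℝ) (k : ℕ) (p q : ℕ × ℕ) : Prop :=
  Relation.TransGen (fun x y => IsChild A k y x) p q

/-- All entries of the `2 × n` array `A` are pairwise distinct. -/
def DistinctEntries (A : ℕ → ℕ → ℝ) (n : ℕ) : Prop :=
  Set.InjOn (fun p : ℕ × ℕ => A p.1 p.2) {p | InRange 1 n p}

lemma exists_card_filter_lt_eq {ι α : Type*} [LinearOrder α] (f : ι → α) (s : Finset ι)
    (hf : Set.InjOn f s) {j : ℕ} (hj : j < s.card) :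
    ∃ x ∈ s, {y ∈ s | f x < f y}.card = j := by
  classical
  induction s using Finset.induction_on_max_value f generalizing j with
  | empty => simp at hj
  | insert a s ha hmax ih =>
    rcases j with _ | j
    · refine ⟨a, s.mem_insert_self a, Finset.card_eq_zero.2 (Finset.filter_eq_empty_iff.2 ?_)⟩
      intro y hy
      rcases Finset.mem_insert.1 hy with rfl | hy
      exacts [lt_irrefl _, not_lt.2 (hmax y hy)]
    · rw [Finset.card_insert_of_notMem ha] at hj
      obtain ⟨x, hx, hcount⟩ := ih (hf.mono (s.subset_insert a)) (j := j) (by omega)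
      have hxa : f x < f a := (hmax x hx).lt_of_ne fun h =>
        ha (hf (Finset.mem_insert_of_mem hx) (s.mem_insert_self a) h ▸ hx)
      refine ⟨x, Finset.mem_insert_of_mem hx, ?_⟩
      rw [Finset.filter_insert, if_pos hxa, Finset.card_insert_of_notMem (by simp [ha]), hcount]

def cells (a b : ℕ) : Finset (ℕ × ℕ) :=
  {1, 2} ×ˢ Finset.Icc a b

@[simp]
lemma mem_cells {a b : ℕ} {q : ℕ × ℕ} : q ∈ cells a b ↔ InRange a b q := by
  simp [cells, InRange]

lemma coe_cells (a b : ℕ) : (cells a b : Set (ℕ × ℕ)) = {q | InRange a b q} :=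
  Set.ext fun _ => mem_cells

lemma card_cells (a b : ℕ) : (cells a b).card = 2 * (b + 1 - a) := by
  simp [cells, Finset.card_product]

lemma setOf_inRange_and_finite (a b : ℕ) (P : ℕ × ℕ → Prop) :
    {q | InRange a b q ∧ P q}.Finite :=
  (cells a b).finite_toSet.subset fun _ hq => mem_cells.2 hq.1

section countAbove

variable (A : ℕ → ℕ → ℝ)

/-- The `k`-th largest entry of columns `a..b` is the one with `countAbove = k - 1`. -/
noncomputable def countAbove (x : ℝ) (a b : ℕ) : ℕ :=
  {q : ℕ × ℕ | InRange a b q ∧ x < A q.1 q.2}.ncard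

variable {A}

lemma countAbove_eq_card_filter (x : ℝ) (a b : ℕ) :
    countAbove A x a b = {q ∈ cells a b | x < A q.1 q.2}.card := by
  rw [countAbove, ← Set.ncard_coe_finset, Finset.coe_filter]
  congr 1
  ext q
  simp

lemma countAbove_le_countAbove {x y : ℝ} {a b a' b' : ℕ} (ha : a' ≤ a) (hb : b ≤ b')
    (hyx : y ≤ x) : countAbove A x a b ≤ countAbove A y a' b' := by
  refine Set.ncard_le_ncard ?_ (setOf_inRange_and_finite _ _ _)
  rintro q ⟨⟨hr, hqa, hqb⟩, hq⟩
  exact ⟨⟨hr, ha.trans hqa, hqb.trans hb⟩, hyx.trans_lt hq⟩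

lemma countAbove_lt_countAbove {x y : ℝ} {a b a' b' : ℕ} (ha : a' ≤ a) (hb : b ≤ b')
    (hyx : y ≤ x) {q : ℕ × ℕ} (hq : InRange a' b' q) (hyq : y < A q.1 q.2)
    (hqx : InRange a b q → A q.1 q.2 ≤ x) : countAbove A x a b < countAbove A y a' b' := by
  refine Set.ncard_lt_ncard (Set.ssubset_iff_exists.2 ⟨?_, q, ⟨hq, hyq⟩, ?_⟩)
    (setOf_inRange_and_finite _ _ _)
  · rintro p ⟨⟨hr, hpa, hpb⟩, hp⟩
    exact ⟨⟨hr, ha.trans hpa, hpb.trans hb⟩, hyx.trans_lt hp⟩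
  · rintro ⟨hq', hxq⟩
    exact (hqx hq').not_gt hxq

lemma exists_countAbove_eq {a b j : ℕ} (hA : Set.InjOn (fun q : ℕ × ℕ => A q.1 q.2)
    {q | InRange a b q}) (hj : j < 2 * (b + 1 - a)) :
    ∃ q, InRange a b q ∧ countAbove A (A q.1 q.2) a b = j := by
  rw [← coe_cells, ← card_cells] at *
  obtain ⟨q, hq, hcount⟩ := exists_card_filter_lt_eq _ _ hA hj
  exact ⟨q, mem_cells.1 hq, by rw [countAbove_eq_card_filter, hcount]⟩

end countAbove

section DAG

variable {A : ℕ → ℕ → ℝ} {k n : ℕ}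

lemma topkSet_nonempty {a b : ℕ} (hab : a ≤ b) (hk : 1 ≤ k) : (TopkSet A k a b).Nonempty := by
  have hne : (cells a b).Nonempty := ⟨(1, a), mem_cells.2 ⟨Or.inl rfl, le_rfl, hab⟩⟩
  obtain ⟨p, hp, hmax⟩ := (cells a b).exists_max_image (fun q => A q.1 q.2) hne
  rw [mem_cells] at hp
  refine ⟨p, hp, ?_⟩
  suffices {q : ℕ × ℕ | InRange a b q ∧ A p.1 p.2 < A q.1 q.2} = ∅ by
    rw [this, Set.ncard_empty]
    omega
  refine Set.eq_empty_of_forall_notMem fun q ⟨hq, hlt⟩ => (hmax q (mem_cells.2 hq)).not_gt hlt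

lemma exists_mem_topkSet_leftCol {a b : ℕ} (hab : a ≤ b) (hk : 1 ≤ k) :
    ∃ r, (r, leftCol A k a b) ∈ TopkSet A k a b := by
  obtain ⟨p, hp⟩ := topkSet_nonempty hab hk
  have hne : {c | ∃ r, (r, c) ∈ TopkSet A k a b}.Nonempty := ⟨p.2, p.1, hp⟩
  exact Nat.sInf_mem hne

lemma exists_mem_topkSet_rightCol {a b : ℕ} (hab : a ≤ b) (hk : 1 ≤ k) :
    ∃ r, (r, rightCol A k a b) ∈ TopkSet A k a b := by
  obtain ⟨p, hp⟩ := topkSet_nonempty hab hk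
  have hne : {c | ∃ r, (r, c) ∈ TopkSet A k a b}.Nonempty := ⟨p.2, p.1, hp⟩
  exact Nat.sSup_mem hne ⟨b, fun c ⟨_, hc⟩ => hc.1.2.2⟩

/-- Column `c` holds an entry that would rank among the `k` largest if added to columns `a..b`. -/
def HasTopkEntry (A : ℕ → ℕ → ℝ) (k a b c : ℕ) : Prop :=
  ∃ r, (r = 1 ∨ r = 2) ∧ countAbove A (A r c) a b < k

lemma hasTopkEntry_of_mem_topkSet {a b r c : ℕ} (h : (r, c) ∈ TopkSet A k a b) :
    HasTopkEntry A k a b c :=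
  ⟨r, h.1.1, h.2⟩

lemma HasTopkEntry.mono {a b a' b' c : ℕ} (h : HasTopkEntry A k a' b' c) (ha : a' ≤ a)
    (hb : b ≤ b') : HasTopkEntry A k a b c :=
  let ⟨r, hr, hcount⟩ := h
  ⟨r, hr, (countAbove_le_countAbove ha hb le_rfl).trans_lt hcount⟩

lemma HasTopkEntry.exists_gt {a b c α β : ℕ} (hA : DistinctEntries A n)
    (h : HasTopkEntry A k a b c) (hc : 1 ≤ c ∧ c ≤ n) (hcab : c < a ∨ b < c)
    (hαβ : InRange a b (α, β)) (hαβn : InRange 1 n (α, β))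
    (hcount : countAbove A (A α β) a b = k - 1) :
    ∃ r, (r = 1 ∨ r = 2) ∧ A α β < A r c := by
  obtain ⟨r, hr, hcount'⟩ := h
  refine ⟨r, hr, lt_of_le_of_ne (not_lt.1 fun hlt => ?_) fun he => ?_⟩
  · have := countAbove_lt_countAbove le_rfl le_rfl hlt.le hαβ hlt fun _ => le_rfl
    omega
  · have := congrArg Prod.snd (@hA (α, β) hαβn (r, c) ⟨hr, hc⟩ he)
    obtain ⟨-, hβa, hβb⟩ := hαβ
    simp only at this
    omega

/-- The invariant of the nodes `[a, b]` of `D^k_A`: each column just outside `[a, b]` holds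
an entry that would be among the `k` largest of `[a, b]`. -/
def Bracketed (A : ℕ → ℕ → ℝ) (k n : ℕ) (p : ℕ × ℕ) : Prop :=
  1 ≤ p.1 ∧ p.1 ≤ p.2 ∧ p.2 ≤ n ∧
    (p.1 = 1 ∨ HasTopkEntry A k p.1 p.2 (p.1 - 1)) ∧
    (p.2 = n ∨ HasTopkEntry A k p.1 p.2 (p.2 + 1))

lemma IsNode.bracketed (hn : 1 ≤ n) (hk : 1 ≤ k) {p : ℕ × ℕ} (h : IsNode A k n p) :
    Bracketed A k n p := by
  induction h with
  | root => exact ⟨le_rfl, hn, le_rfl, Or.inl rfl, Or.inl rfl⟩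
  | @child q p _ hchild ih =>
    obtain ⟨h1, h12, h2n, hleft, hright⟩ := ih
    rcases hchild.2 with ⟨rfl, hlt⟩ | ⟨rfl, hlt⟩
    · obtain ⟨r, hr⟩ := exists_mem_topkSet_rightCol (A := A) h12 hk
      have hrc := hr.1.2.2
      refine ⟨h1, by simp only; omega, by simp only; omega,
        hleft.imp_right fun h => h.mono le_rfl (by omega), Or.inr ?_⟩
      show HasTopkEntry A k q.1 (rightCol A k q.1 q.2 - 1) (rightCol A k q.1 q.2 - 1 + 1)
      rw [Nat.sub_add_cancel (h1.trans_lt hlt).le]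
      exact (hasTopkEntry_of_mem_topkSet hr).mono le_rfl (by omega)
    · obtain ⟨r, hr⟩ := exists_mem_topkSet_leftCol (A := A) h12 hk
      have hlc := hr.1.2.1
      refine ⟨by simp only; omega, by simp only; omega, h2n, Or.inr ?_,
        hright.imp_right fun h => h.mono (by omega) le_rfl⟩
      show HasTopkEntry A k (leftCol A k q.1 q.2 + 1) q.2 (leftCol A k q.1 q.2 + 1 - 1)
      rw [Nat.add_sub_cancel]
      exact (hasTopkEntry_of_mem_topkSet hr).mono (by omega) le_rfl

lemma setOf_isNode_finite (hn : 1 ≤ n) (hk : 1 ≤ k) : {p | IsNode A k n p}.Finite := by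
  refine (Set.finite_Icc (1, 1) (n, n)).subset fun p hp => ?_
  obtain ⟨h1, h12, h2n, -, -⟩ := IsNode.bracketed hn hk hp
  simp only [Set.mem_Icc, Prod.le_def]
  omega

variable (A k n) in
def kthNodes (α β : ℕ) : Set (ℕ × ℕ) :=
  {p : ℕ × ℕ | IsNode A k n p ∧ k < 2 * (p.2 - p.1 + 1) ∧
    InRange p.1 p.2 (α, β) ∧ countAbove A (A α β) p.1 p.2 = k - 1}

section kthNodes

variable {α β : ℕ} {p p' : ℕ × ℕ} (hA : DistinctEntries A n) (hn : 1 ≤ n) (hk : 1 ≤ k)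
include hA hn hk

lemma exists_gt_left_of_mem_kthNodes (hp : p ∈ kthNodes A k n α β) (h1 : 1 < p.1) :
    ∃ r, (r = 1 ∨ r = 2) ∧ A α β < A r (p.1 - 1) := by
  obtain ⟨hnode, -, hαβ, hcount⟩ := hp
  obtain ⟨-, h12, h2n, hleft | hleft, -⟩ := hnode.bracketed hn hk
  · omega
  obtain ⟨hα, hβ1, hβ2⟩ := hαβ
  exact hleft.exists_gt hA (by omega) (by omega) ⟨hα, hβ1, hβ2⟩ ⟨hα, by omega, by omega⟩ hcount

lemma exists_gt_right_of_mem_kthNodes (hp : p ∈ kthNodes A k n α β) (h2 : p.2 < n) :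
    ∃ r, (r = 1 ∨ r = 2) ∧ A α β < A r (p.2 + 1) := by
  obtain ⟨hnode, -, hαβ, hcount⟩ := hp
  obtain ⟨h1, h12, -, -, hright | hright⟩ := hnode.bracketed hn hk
  · omega
  obtain ⟨hα, hβ1, hβ2⟩ := hαβ
  exact hright.exists_gt hA (by omega) (by omega) ⟨hα, hβ1, hβ2⟩ ⟨hα, by omega, by omega⟩ hcount

/-- The column added on the right would contribute a further entry above `A α β`. -/
lemma not_snd_lt_of_mem_kthNodes (hp : p ∈ kthNodes A k n α β) (hp' : p' ∈ kthNodes A k n α β)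
    (h1 : p'.1 ≤ p.1) (h2 : p.2 < p'.2) : False := by
  have h2n := (hp'.1.bracketed hn hk).2.2.1
  obtain ⟨r, hr, hgt⟩ := exists_gt_right_of_mem_kthNodes hA hn hk hp (by omega)
  have := countAbove_lt_countAbove h1 h2.le le_rfl (q := (r, p.2 + 1))
    ⟨hr, by have := (hp.1.bracketed hn hk).2.1; omega, h2⟩ hgt fun h => absurd h.2.2 (by omega)
  have := hp.2.2.2
  have := hp'.2.2.2
  omega

lemma countAbove_lt_of_mem_kthNodes (hp : p ∈ kthNodes A k n α β)
    (hp' : p' ∈ kthNodes A k n α β) (h : p.1 < p'.1) :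
    countAbove A (A α β) p'.1 β < countAbove A (A α β) p.1 β := by
  have h1 := (hp.1.bracketed hn hk).1
  have hβ : p'.1 ≤ β := hp'.2.2.1.2.1
  obtain ⟨r, hr, hgt⟩ := exists_gt_left_of_mem_kthNodes hA hn hk hp' (by omega)
  exact countAbove_lt_countAbove (by omega) le_rfl le_rfl (q := (r, p'.1 - 1))
    ⟨hr, by omega, by omega⟩ hgt fun ⟨_, h, _⟩ => by simp only at h; omega

/-- The nodes of `kthNodes` are told apart by how many entries above `A α β` lie left of
column `β`; there are fewer than `k` of these. -/
lemma ncard_kthNodes_le (α β : ℕ) : (kthNodes A k n α β).ncard ≤ k := by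
  have hmaps : ∀ p ∈ kthNodes A k n α β,
      countAbove A (A α β) p.1 β ∈ (Finset.range k : Set ℕ) := by
    rintro p ⟨-, -, hαβ, hcount⟩
    have := countAbove_le_countAbove (A := A) (x := A α β) (a := p.1) (b := β) le_rfl
      hαβ.2.2 le_rfl
    simp only [Finset.coe_range, Set.mem_Iio]
    omega
  have hinj : Set.InjOn (fun p => countAbove A (A α β) p.1 β) (kthNodes A k n α β) := by
    intro p hp p' hp' heq
    obtain h | h | h := lt_trichotomy p.1 p'.1
    · exact absurd heq (countAbove_lt_of_mem_kthNodes hA hn hk hp hp' h).ne'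
    · obtain h' | h' | h' := lt_trichotomy p.2 p'.2
      · exact (not_snd_lt_of_mem_kthNodes hA hn hk hp hp' h.ge h').elim
      · exact Prod.ext h h'
      · exact (not_snd_lt_of_mem_kthNodes hA hn hk hp' hp h.le h').elim
    · exact absurd heq (countAbove_lt_of_mem_kthNodes hA hn hk hp' hp h).ne
  simpa using Set.ncard_le_ncard_of_injOn _ hmaps hinj (Finset.range k).finite_toSet

end kthNodes

lemma ncard_nonLeaf_le (hA : DistinctEntries A n) (hn : 1 ≤ n) (hk : 1 ≤ k) :
    {p : ℕ × ℕ | IsNode A k n p ∧ k < 2 * (p.2 - p.1 + 1)}.ncard ≤ 2 * n * k := by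
  have hcover : {p : ℕ × ℕ | IsNode A k n p ∧ k < 2 * (p.2 - p.1 + 1)} ⊆
      ⋃ c ∈ cells 1 n, kthNodes A k n c.1 c.2 := by
    rintro p ⟨hp, hnl⟩
    obtain ⟨h1, h12, h2n, -, -⟩ := hp.bracketed hn hk
    have hinj : Set.InjOn (fun q : ℕ × ℕ => A q.1 q.2) {q | InRange p.1 p.2 q} :=
      hA.mono fun q hq => (⟨hq.1, h1.trans hq.2.1, hq.2.2.trans h2n⟩ : InRange 1 n q)
    obtain ⟨c, hc, hcount⟩ := exists_countAbove_eq (j := k - 1) hinj (by omega)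
    have hc' : c ∈ cells 1 n := by
      obtain ⟨hr, hc1, hc2⟩ := hc
      exact mem_cells.2 ⟨hr, by omega, by omega⟩
    exact Set.mem_biUnion hc' ⟨hp, hnl, hc, hcount⟩
  have hfin : (⋃ c ∈ cells 1 n, kthNodes A k n c.1 c.2).Finite :=
    (setOf_isNode_finite hn hk).subset (Set.iUnion₂_subset fun _ _ _ hp => hp.1)
  calc _ ≤ (⋃ c ∈ cells 1 n, kthNodes A k n c.1 c.2).ncard := Set.ncard_le_ncard hcover hfin
    _ ≤ ∑ c ∈ cells 1 n, (kthNodes A k n c.1 c.2).ncard := Finset.set_ncard_biUnion_le _ _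
    _ ≤ ∑ _c ∈ cells 1 n, k := Finset.sum_le_sum fun c _ => ncard_kthNodes_le hA hn hk c.1 c.2
    _ = 2 * n * k := by simp [card_cells]

lemma ncard_setOf_isNode_le (hn : 1 ≤ n) (hk : 1 ≤ k) :
    {p | IsNode A k n p}.ncard ≤
      2 * {p : ℕ × ℕ | IsNode A k n p ∧ k < 2 * (p.2 - p.1 + 1)}.ncard + 1 := by
  set N := {p : ℕ × ℕ | IsNode A k n p ∧ k < 2 * (p.2 - p.1 + 1)}
  set leftChild := fun q : ℕ × ℕ => (q.1, rightCol A k q.1 q.2 - 1)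
  set rightChild := fun q : ℕ × ℕ => (leftCol A k q.1 q.2 + 1, q.2)
  have hN : N.Finite := (setOf_isNode_finite hn hk).subset fun p hp => hp.1
  have hcover : {p | IsNode A k n p} ⊆ insert (1, n) (leftChild '' N ∪ rightChild '' N) := by
    rintro p (_ | ⟨hq, hnl, ⟨rfl, -⟩ | ⟨rfl, -⟩⟩)
    · exact Set.mem_insert _ _
    · exact Set.mem_insert_of_mem _ (Or.inl ⟨_, ⟨hq, hnl⟩, rfl⟩)
    · exact Set.mem_insert_of_mem _ (Or.inr ⟨_, ⟨hq, hnl⟩, rfl⟩)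
  calc _ ≤ (insert (1, n) (leftChild '' N ∪ rightChild '' N)).ncard :=
        Set.ncard_le_ncard hcover (((hN.image _).union (hN.image _)).insert _)
    _ ≤ (leftChild '' N).ncard + (rightChild '' N).ncard + 1 :=
        (Set.ncard_insert_le _ _).trans (by gcongr; exact Set.ncard_union_le _ _)
    _ ≤ 2 * N.ncard + 1 := by
        have := Set.ncard_image_le (f := leftChild) hN
        have := Set.ncard_image_le (f := rightChild) hN
        omega

end DAG

/-- `D^k_A` has at most `6kn` nodes; in particular, for each fixed position `(α, β)`,
the number of non-leaf nodes whose `k`-th largest element is located at `(α, β)` is at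
most `k`. -/
theorem dag_node_count (A : ℕ → ℕ → ℝ) (n k : ℕ) (hn : 1 ≤ n) (hk : 1 ≤ k)
    (hA : DistinctEntries A n) :
    {p : ℕ × ℕ | IsNode A k n p}.ncard ≤ 6 * k * n ∧
    ∀ α β : ℕ,
      {p : ℕ × ℕ | IsNode A k n p ∧ k < 2 * (p.2 - p.1 + 1) ∧
        InRange p.1 p.2 (α, β) ∧
        {q | InRange p.1 p.2 q ∧ A α β < A q.1 q.2}.ncard = k - 1}.ncard ≤ k := by
  refine ⟨?_, ncard_kthNodes_le hA hn hk⟩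
  have hnodes := ncard_setOf_isNode_le (A := A) hn hk
  have hnonLeaf := ncard_nonLeaf_le hA hn hk
  have hkn : 1 ≤ k * n := Nat.one_le_iff_ne_zero.2 (by positivity)
  nlinarith
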